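/- With α = 1 and β ≥ C(K, 2), the beta-binomial prior density over partitions of {1,…,K} is nonincreasing in partition size: for any partitions ρ, q with |q| = |ρ| + 1, π(ρ | K, 1, β) ≥ π(q | K, 1, β); if β > C(K, 2) the inequality is strict. -/

import Mathlib

/-- Stirling numbers of the second kind, via the recurrence
`S(n+1, k+1) = (k+1)·S(n, k+1) + S(n, k)`. -/
def stirling : ℕ → ℕ → ℕ
  | 0, 0 => 1
  | 0, _ + 1 => 0
  | _ + 1, 0 => 0
  | n + 1, k + 1 => (k + 1) * stirling n (k + 1) + stirling n k

/-- The real Beta function `B(a, b) = Γ(a)Γ(b)/Γ(a + b)`. -/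
noncomputable def rBeta (a b : ℝ) : ℝ := Real.Gamma a * Real.Gamma b / Real.Gamma (a + b)

/-- The (adjusted) beta-binomial prior density over partitions of `{1, …, K}`:
`π(ρ | K, α, β) = C(K−1, |ρ|−1) · B(|ρ|−1+α, K−|ρ|+β) / (B(α, β) · S(K, |ρ|))`. -/
noncomputable def bbDensity (K : ℕ) (α β : ℝ)
    (ρ : Finpartition (Finset.univ : Finset (Fin K))) : ℝ :=
  ((K - 1).choose (ρ.parts.card - 1) : ℝ) *
    rBeta ((ρ.parts.card : ℝ) - 1 + α) ((K : ℝ) - ρ.parts.card + β) /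
    (rBeta α β * (stirling K ρ.parts.card : ℝ))

/-!
Write `m = |ρ|`, `b = K - m - 1 + β` and `S(K, j)` for the Stirling numbers. The recursions
`Γ(s + 1) = s Γ(s)` and `C(K-1, m) m = C(K-1, m-1) (K - m)` show that at `α = 1` the density ratio is
`π(q) / π(ρ) = (K - m) S(K, m) / (b S(K, m+1))`. The Stirling inequality
`(n - m) S(n, m) ≤ C(m+1, 2) S(n, m+1)` (splitting one block of an `m`-partition in one of at
least `n - m` ways, versus merging two of the `m + 1` blocks) bounds the numerator by
`C(K, 2) S(K, m+1) ≤ β S(K, m+1) ≤ b S(K, m+1)`.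
-/

namespace Nat

theorem stirlingSecond_pos {n k : ℕ} (hk : k ≠ 0) (hkn : k ≤ n) : 0 < stirlingSecond n k := by
  induction n, hkn using Nat.le_induction with
  | base => simp [stirlingSecond_self]
  | succ n _ ih =>
    rw [stirlingSecond_succ_left n k hk]
    exact Nat.add_pos_left (Nat.mul_pos (Nat.pos_of_ne_zero hk) ih) _

theorem sub_mul_stirlingSecond_le_choose_two_mul (n k : ℕ) :
    (n - k) * stirlingSecond n k ≤ (k + 1).choose 2 * stirlingSecond n (k + 1) := by
  induction n generalizing k with
  | zero => simp
  | succ n ih =>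
    rcases k with _ | k
    · simp
    rcases Nat.lt_or_ge n (k + 1) with hn | hn
    · simp [Nat.sub_eq_zero_of_le (by omega : n + 1 ≤ k + 1)]
    obtain ⟨t, rfl⟩ := Nat.exists_eq_add_of_le hn
    have hchoose : (k + 1 + 1).choose 2 = (k + 1).choose 2 + (k + 1) := by
      rw [Nat.choose_succ_succ', Nat.choose_one_right, add_comm]
    have ih₁ := ih k
    have ih₂ := ih (k + 1)
    rw [show k + 1 + t - k = t + 1 by omega] at ih₁
    rw [show k + 1 + t - (k + 1) = t by omega, hchoose] at ih₂
    rw [stirlingSecond_succ_succ, stirlingSecond_succ_succ,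
      show k + 1 + t + 1 - (k + 1) = t + 1 by omega, hchoose]
    nlinarith [Nat.mul_le_mul_left (k + 2) ih₂]

end Nat

theorem stirling_eq_stirlingSecond : stirling = Nat.stirlingSecond := by
  funext n k
  induction n generalizing k with
  | zero => cases k <;> rfl
  | succ n ih => cases k <;> simp [stirling, Nat.stirlingSecond, ih]

theorem stirling_pos {n k : ℕ} (hk : k ≠ 0) (hkn : k ≤ n) : 0 < stirling n k :=
  stirling_eq_stirlingSecond ▸ Nat.stirlingSecond_pos hk hkn

theorem sub_mul_stirling_le_choose_two_mul {n k : ℕ} (hkn : k < n) :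
    ((n : ℝ) - k) * stirling n k ≤ n.choose 2 * stirling n (k + 1) := by
  rw [stirling_eq_stirlingSecond, ← Nat.cast_sub hkn.le]
  exact_mod_cast (Nat.sub_mul_stirlingSecond_le_choose_two_mul n k).trans
    (Nat.mul_le_mul_right _ (Nat.choose_le_choose 2 hkn))

theorem rBeta_pos {a b : ℝ} (ha : 0 < a) (hb : 0 < b) : 0 < rBeta a b := by
  have := Real.Gamma_pos_of_pos ha
  have := Real.Gamma_pos_of_pos hb
  have := Real.Gamma_pos_of_pos (add_pos ha hb)
  unfold rBeta
  positivity

theorem rBeta_add_one_left_mul {a b : ℝ} (ha : a ≠ 0) (hb : b ≠ 0) :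
    rBeta (a + 1) b * b = a * rBeta a (b + 1) := by
  rw [rBeta, rBeta, Real.Gamma_add_one ha, Real.Gamma_add_one hb, add_right_comm, add_assoc]
  ring

namespace Finpartition

variable {n : ℕ} (P : Finpartition (Finset.univ : Finset (Fin n)))

theorem card_parts_le_of_univ : P.parts.card ≤ n := by
  simpa using P.card_parts_le_card

theorem card_parts_ne_zero_of_univ (hn : n ≠ 0) : P.parts.card ≠ 0 := by
  have : NeZero n := ⟨hn⟩
  exact (Finset.card_pos.mpr (P.parts_nonempty Finset.univ_nonempty.ne_empty)).ne'

end Finpartition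

theorem bbDensity_pos {K : ℕ} (hK : K ≠ 0) {α β : ℝ} (hα : 0 < α) (hβ : 0 < β)
    (ρ : Finpartition (Finset.univ : Finset (Fin K))) : 0 < bbDensity K α β ρ := by
  have hρ₀ := ρ.card_parts_ne_zero_of_univ hK
  have hρK := ρ.card_parts_le_of_univ
  have hchoose : 0 < (K - 1).choose (ρ.parts.card - 1) := Nat.choose_pos (by omega)
  have hS := stirling_pos hρ₀ hρK
  have hB : 0 < rBeta ((ρ.parts.card : ℝ) - 1 + α) ((K : ℝ) - ρ.parts.card + β) := by
    have : (1 : ℝ) ≤ ρ.parts.card := by exact_mod_cast Nat.one_le_iff_ne_zero.mpr hρ₀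
    have : (ρ.parts.card : ℝ) ≤ K := by exact_mod_cast hρK
    exact rBeta_pos (by linarith) (by linarith)
  have hB₀ := rBeta_pos hα hβ
  unfold bbDensity
  positivity

theorem bbDensity_mul_eq_of_card_succ {K m : ℕ} {α β : ℝ} (hm : m ≠ 0) (hmK : m < K)
    (hα : (m : ℝ) - 1 + α ≠ 0) (hβ : (K : ℝ) - m - 1 + β ≠ 0)
    {ρ q : Finpartition (Finset.univ : Finset (Fin K))}
    (hρ : ρ.parts.card = m) (hq : q.parts.card = m + 1) :
    bbDensity K α β q * (m * ((K - m - 1 + β) * stirling K (m + 1))) =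
      bbDensity K α β ρ * ((m - 1 + α) * ((K - m) * stirling K m)) := by
  have hS₀ : (stirling K m : ℝ) ≠ 0 := by exact_mod_cast (stirling_pos hm hmK.le).ne'
  have hS₁ : (stirling K (m + 1) : ℝ) ≠ 0 := by
    exact_mod_cast (stirling_pos m.succ_ne_zero hmK).ne'
  obtain ⟨k, rfl⟩ : ∃ k, m = k + 1 := ⟨m - 1, by omega⟩
  have hchoose : ((K - 1).choose (k + 1) : ℝ) * (k + 1) = (K - 1).choose k * (K - (k + 1)) := by
    have h := Nat.choose_succ_right_eq (K - 1) k
    rw [Nat.sub_sub, add_comm 1 k] at h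
    rw [show (K : ℝ) - (k + 1) = ((K - (k + 1) : ℕ) : ℝ) by push_cast [Nat.cast_sub hmK.le]; ring]
    exact_mod_cast h
  have hbeta := rBeta_add_one_left_mul hα hβ
  rw [bbDensity, bbDensity, hρ, hq]
  push_cast at hα hβ hbeta hS₁ ⊢
  rw [show (k : ℝ) + 1 + 1 - 1 + α = (k + 1 - 1 + α) + 1 by ring,
    show (K : ℝ) - (k + 1) + β = (K - (k + 1) - 1 + β) + 1 by ring,
    show (K : ℝ) - (k + 1 + 1) + β = K - (k + 1) - 1 + β by ring]
  set a := (k : ℝ) + 1 - 1 + α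
  set b := (K : ℝ) - (k + 1) - 1 + β
  set S₀ := (stirling K (k + 1) : ℝ)
  set S₁ := (stirling K (k + 1 + 1) : ℝ)
  calc _ = ((K - 1).choose (k + 1) * (k + 1) : ℝ) * (rBeta (a + 1) b * b) / rBeta α β *
        (S₁ / S₁) := by ring
    _ = ((K - 1).choose k * (K - (k + 1)) : ℝ) * (a * rBeta a (b + 1)) / rBeta α β *
        (S₀ / S₀) := by rw [hchoose, hbeta, div_self hS₀, div_self hS₁]
    _ = _ := by ring

theorem bbDensity_one_mul_eq_of_card_succ {K m : ℕ} {β : ℝ} (hm : m ≠ 0) (hmK : m < K)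
    (hβ : (K : ℝ) - m - 1 + β ≠ 0) {ρ q : Finpartition (Finset.univ : Finset (Fin K))}
    (hρ : ρ.parts.card = m) (hq : q.parts.card = m + 1) :
    bbDensity K 1 β q * ((K - m - 1 + β) * stirling K (m + 1)) =
      bbDensity K 1 β ρ * ((K - m) * stirling K m) := by
  have h := bbDensity_mul_eq_of_card_succ hm hmK
    (by rw [sub_add_cancel]; exact_mod_cast hm) hβ hρ hq
  rw [sub_add_cancel, mul_left_comm, mul_left_comm (bbDensity K 1 β ρ)] at h
  exact mul_left_cancel₀ (Nat.cast_ne_zero.mpr hm) h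

/-- With `α = 1` and `β ≥ C(K, 2)`, the beta-binomial prior density over
partitions of `{1, …, K}` is nonincreasing in partition size: for partitions `ρ, q` with
`|q| = |ρ| + 1` one has `π(q) ≤ π(ρ)`; if `β > C(K, 2)` the inequality is strict. -/
theorem bbDensity_decreasing (K : ℕ) (hK : 2 ≤ K) (β : ℝ)
    (hβ : (K.choose 2 : ℝ) ≤ β)
    (ρ q : Finpartition (Finset.univ : Finset (Fin K)))
    (hq : q.parts.card = ρ.parts.card + 1) :
    bbDensity K 1 β q ≤ bbDensity K 1 β ρ ∧
      ((K.choose 2 : ℝ) < β → bbDensity K 1 β q < bbDensity K 1 β ρ) := by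
  set m := ρ.parts.card
  have hm : m ≠ 0 := ρ.card_parts_ne_zero_of_univ (by omega)
  have hmK : m < K := by simpa [hq] using q.card_parts_le_of_univ
  have hβ₀ : 0 < β := (Nat.cast_pos.mpr (Nat.choose_pos hK)).trans_le hβ
  have hmK' : (m : ℝ) + 1 ≤ K := by exact_mod_cast hmK
  have hb : 0 < (K : ℝ) - m - 1 + β := by linarith
  have hS : (0 : ℝ) < stirling K (m + 1) := by exact_mod_cast stirling_pos m.succ_ne_zero hmK
  have hsplit := sub_mul_stirling_le_choose_two_mul hmK
  have hβS : β * stirling K (m + 1) ≤ ((K : ℝ) - m - 1 + β) * stirling K (m + 1) :=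
    mul_le_mul_of_nonneg_right (by linarith) hS.le
  have hratio := bbDensity_one_mul_eq_of_card_succ hm hmK hb.ne' rfl hq
  have hρ := bbDensity_pos (by omega) one_pos hβ₀ ρ
  constructor
  · refine le_of_mul_le_mul_right ?_ (mul_pos hb hS)
    rw [hratio]
    exact mul_le_mul_of_nonneg_left
      (hsplit.trans ((mul_le_mul_of_nonneg_right hβ hS.le).trans hβS)) hρ.le
  · intro hlt
    refine lt_of_mul_lt_mul_right ?_ (mul_pos hb hS).le
    rw [hratio]
    exact mul_lt_mul_of_pos_left
      (hsplit.trans_lt ((mul_lt_mul_of_pos_right hlt hS).trans_le hβS)) hρ
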